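/- In G = ℤ² ⋊ ℤ/2ℤ (swap action) with a = ((1,0),0), t = ((0,0),1), a word over A = {a, a⁻¹, t, t⁻¹} is geodesic if and only if it belongs to the language L = { aˣ : x ∈ ℤ } ∪ { aˣ t aʸ : x, y ∈ ℤ } ∪ { a^{x₁} t aʸ t a^{x₂} : x₁, x₂, y ∈ ℤ, y ≠ 0, x₁·x₂ ≥ 0 }, where aˣ for negative x means (a⁻¹)^{|x|} and trivial powers are omitted. -/

import Mathlib

/-- The coordinate-swapping automorphism of ℤ². -/
def swapAut : MulAut (Multiplicative (ℤ × ℤ)) :=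
  AddEquiv.toMultiplicative (AddEquiv.prodComm : (ℤ × ℤ) ≃+ (ℤ × ℤ))

lemma swapAut_sq : swapAut ^ 2 = 1 := by
  refine MulEquiv.ext fun z => ?_
  show swapAut (swapAut z) = z
  cases z
  rfl

/-- The action of ℤ/2ℤ on ℤ² by swapping the two coordinates. -/
def swapAction : Multiplicative (ZMod 2) →* MulAut (Multiplicative (ℤ × ℤ)) where
  toFun ε := swapAut ^ (Multiplicative.toAdd ε).val
  map_one' := rfl
  map_mul' x y := by
    show swapAut ^ _ = swapAut ^ _ * swapAut ^ _
    rw [← pow_add]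
    have key : ∀ m n : ℕ, m % 2 = n % 2 → swapAut ^ m = swapAut ^ n := by
      intro m n h
      rw [← Nat.div_add_mod m 2, ← Nat.div_add_mod n 2, h, pow_add, pow_add,
        pow_mul, pow_mul, swapAut_sq]
      simp
    apply key
    have := ZMod.val_add (Multiplicative.toAdd x) (Multiplicative.toAdd y)
    simp only [toAdd_mul] at *
    omega

/-- The group G = ℤ² ⋊ ℤ/2ℤ with the swap action. -/
abbrev GG := SemidirectProduct (Multiplicative (ℤ × ℤ)) (Multiplicative (ZMod 2)) swapAction

/-- The generator a = ((1,0), 0). -/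
def ga : GG := SemidirectProduct.inl (Multiplicative.ofAdd ((1, 0) : ℤ × ℤ))

/-- The generator t = ((0,0), 1). -/
def gt : GG := SemidirectProduct.inr (Multiplicative.ofAdd (1 : ZMod 2))

/-- The element ((x,y), ε) of G. -/
def el (x y : ℤ) (ε : ZMod 2) : GG :=
  ⟨Multiplicative.ofAdd (x, y), Multiplicative.ofAdd ε⟩

/-- The generating set A = {a, a⁻¹, t, t⁻¹}. -/
def GenSet : Set GG := {ga, ga⁻¹, gt, gt⁻¹}

/-- `w` is a word over the alphabet A. -/
def IsWord (w : List GG) : Prop := ∀ x ∈ w, x ∈ GenSet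

/-- `w` is a word over A representing the group element `g` (via its product). -/
def Represents (w : List GG) (g : GG) : Prop := IsWord w ∧ w.prod = g

/-- The word length of `g`: minimal length of a word over A representing `g`. -/
noncomputable def wordLength (g : GG) : ℕ :=
  sInf {n | ∃ w : List GG, Represents w g ∧ w.length = n}

/-- A word over A is geodesic if no strictly shorter word over A represents
the same element. -/
def IsGeodesic (w : List GG) : Prop :=
  IsWord w ∧ ∀ v : List GG, IsWord v → v.prod = w.prod → w.length ≤ v.length

open Classical in
/-- The number of t-letters of a word (occurrences of t and t⁻¹). -/
noncomputable def tCount (w : List GG) : ℕ :=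
  w.countP (fun x => decide (x = gt ∨ x = gt⁻¹))

/-- The word aˣ over A: x letters `a` if x ≥ 0, |x| letters `a⁻¹` if x < 0. -/
def apow (x : ℤ) : List GG :=
  if 0 ≤ x then List.replicate x.toNat ga else List.replicate (-x).toNat ga⁻¹

/-- The word metric on G with respect to A. -/
noncomputable def dA (g h : GG) : ℕ := wordLength (g⁻¹ * h)

/-- The point of G reached at time i along the word w (the endpoint if i
exceeds the length of w). -/
def pt (w : List GG) (i : ℕ) : GG := (w.take i).prod

/-- Words u and w synchronously k-fellow travel. -/
def FellowTravels (k : ℕ) (u w : List GG) : Prop :=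
  ∀ i : ℕ, dA (pt u i) (pt w i) ≤ k

/-- The language of all geodesic words over A. -/
def GeodLang : Set (List GG) :=
  {w | ∃ x : ℤ, w = apow x} ∪
  {w | ∃ x y : ℤ, w = apow x ++ [gt] ++ apow y} ∪
  {w | ∃ x₁ y x₂ : ℤ, y ≠ 0 ∧ x₁ * x₂ ≥ 0 ∧
    w = apow x₁ ++ [gt] ++ apow y ++ [gt] ++ apow x₂}

/-! The element `((x, y), ε)` has word length `|x| + |y| + 1` if `ε = 1`, `|x|` if `ε = 0` and
`y = 0`, and `|x| + |y| + 2` otherwise (`normLength`): the words of `GeodLang` realise these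
values, and left multiplication by a generator changes the formula by at most one, so no word is
shorter. Hence a word is geodesic iff its length equals `normLength` of its product. This
equality passes to suffixes, and it survives prepending a letter to a word of `GeodLang` only if
an `a^{±1}` agrees in sign with the outer powers of `a`, or a `t` creates a nonzero middle power;
induction on the word gives the converse. -/

lemma el_zero_mul (x y x' y' : ℤ) (e : ZMod 2) :
    el x y 0 * el x' y' e = el (x + x') (y + y') e :=
  SemidirectProduct.ext rfl (zero_add e)

lemma el_one_mul (x y x' y' : ℤ) (e : ZMod 2) :
    el x y 1 * el x' y' e = el (x + y') (y + x') (1 + e) := rfl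

lemma ga_eq_el : ga = el 1 0 0 := rfl

lemma ga_inv_eq_el : ga⁻¹ = el (-1) 0 0 := rfl

lemma gt_eq_el : gt = el 0 0 1 := rfl

lemma gt_inv : gt⁻¹ = gt := rfl

lemma ga_mul_el (x y : ℤ) (e : ZMod 2) : ga * el x y e = el (x + 1) y e := by
  rw [ga_eq_el, el_zero_mul, add_comm 1, zero_add]

lemma ga_inv_mul_el (x y : ℤ) (e : ZMod 2) : ga⁻¹ * el x y e = el (x - 1) y e := by
  rw [ga_inv_eq_el, el_zero_mul, neg_add_eq_sub, zero_add]

lemma gt_mul_el_zero (x y : ℤ) : gt * el x y 0 = el y x 1 := by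
  rw [gt_eq_el, el_one_mul, zero_add, zero_add, add_zero]

lemma gt_mul_el_one (x y : ℤ) : gt * el x y 1 = el y x 0 := by
  rw [gt_eq_el, el_one_mul, zero_add, zero_add]
  rfl

lemma zmod_two_cases (e : ZMod 2) : e = 0 ∨ e = 1 := by
  revert e; decide

lemma exists_eq_el (g : GG) : ∃ x y e, g = el x y e := ⟨_, _, _, rfl⟩

lemma mem_genSet_iff {s : GG} : s ∈ GenSet ↔ s = ga ∨ s = ga⁻¹ ∨ s = gt := by
  simp only [GenSet, gt_inv, Set.mem_insert_iff, Set.mem_singleton_iff, or_self]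

def normLength (g : GG) : ℕ :=
  (Multiplicative.toAdd g.left).1.natAbs + (Multiplicative.toAdd g.left).2.natAbs +
    if Multiplicative.toAdd g.right = 1 then 1
    else if (Multiplicative.toAdd g.left).2 = 0 then 0 else 2

lemma normLength_el_zero (x y : ℤ) :
    normLength (el x y 0) = x.natAbs + y.natAbs + if y = 0 then 0 else 2 := rfl

lemma normLength_el_one (x y : ℤ) : normLength (el x y 1) = x.natAbs + y.natAbs + 1 := rfl

lemma normLength_gen_mul_le {s : GG} (hs : s ∈ GenSet) (g : GG) :
    normLength (s * g) ≤ normLength g + 1 := by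
  obtain ⟨x, y, e, rfl⟩ := exists_eq_el g
  rcases zmod_two_cases e with rfl | rfl <;> rcases mem_genSet_iff.mp hs with rfl | rfl | rfl <;>
    simp only [ga_mul_el, ga_inv_mul_el, gt_mul_el_zero, gt_mul_el_one, normLength_el_zero,
      normLength_el_one] <;> (try split_ifs) <;> omega

lemma normLength_prod_le {w : List GG} (hw : IsWord w) : normLength w.prod ≤ w.length := by
  induction w with
  | nil => exact Nat.zero_le _
  | cons s v ih =>
    obtain ⟨hs, hv⟩ := List.forall_mem_cons.mp hw
    rw [List.prod_cons, List.length_cons]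
    exact (normLength_gen_mul_le hs v.prod).trans (Nat.add_le_add_right (ih hv) 1)

lemma isWord_apow (x : ℤ) : IsWord (apow x) := by
  intro s hs
  unfold apow at hs
  split at hs <;> rw [List.eq_of_mem_replicate hs] <;> simp [GenSet]

lemma length_apow (x : ℤ) : (apow x).length = x.natAbs := by
  unfold apow
  split <;> simp only [List.length_replicate] <;> omega

lemma ga_cons_apow {x : ℤ} (hx : 0 ≤ x) : ga :: apow x = apow (x + 1) := by
  rw [apow, apow, if_pos hx, if_pos (by omega), show (x + 1).toNat = x.toNat + 1 by omega,
    List.replicate_succ]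

lemma ga_inv_cons_apow {x : ℤ} (hx : x ≤ 0) : ga⁻¹ :: apow x = apow (x - 1) := by
  obtain rfl | hx := hx.eq_or_lt
  · rfl
  · rw [apow, apow, if_neg (by omega), if_neg (by omega),
      show (-(x - 1)).toNat = (-x).toNat + 1 by omega, List.replicate_succ]

lemma prod_apow (x : ℤ) : (apow x).prod = el x 0 0 := by
  induction x using Int.induction_on with
  | zero => rfl
  | succ n ih =>
    rw [← ga_cons_apow (by omega), List.prod_cons, ih, ga_mul_el]
  | pred n ih =>
    rw [← ga_inv_cons_apow (by omega), List.prod_cons, ih, ga_inv_mul_el]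

lemma prod_apow_gt_apow (x y : ℤ) : (apow x ++ [gt] ++ apow y).prod = el x y 1 := by
  simp only [List.prod_append, List.prod_singleton, prod_apow, gt_eq_el, el_zero_mul, el_one_mul,
    add_zero, zero_add]

lemma prod_apow_gt_apow_gt_apow (x₁ y x₂ : ℤ) :
    (apow x₁ ++ [gt] ++ apow y ++ [gt] ++ apow x₂).prod = el (x₁ + x₂) y 0 := by
  rw [List.prod_append, List.prod_append, prod_apow_gt_apow, List.prod_singleton, prod_apow,
    mul_assoc, gt_mul_el_zero, el_one_mul, add_zero]
  rfl

lemma isWord_append {u v : List GG} : IsWord (u ++ v) ↔ IsWord u ∧ IsWord v :=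
  List.forall_mem_append

lemma isWord_gt : IsWord [gt] := by
  simp [IsWord, GenSet]

lemma apow_mem_geodLang (x : ℤ) : apow x ∈ GeodLang := Or.inl (Or.inl ⟨x, rfl⟩)

lemma apow_gt_apow_mem_geodLang (x y : ℤ) : apow x ++ [gt] ++ apow y ∈ GeodLang :=
  Or.inl (Or.inr ⟨x, y, rfl⟩)

lemma apow_gt_apow_gt_apow_mem_geodLang {x₁ y x₂ : ℤ} (hy : y ≠ 0) (hx : x₁ * x₂ ≥ 0) :
    apow x₁ ++ [gt] ++ apow y ++ [gt] ++ apow x₂ ∈ GeodLang :=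
  Or.inr ⟨x₁, y, x₂, hy, hx, rfl⟩

lemma isWord_of_mem_geodLang {w : List GG} (h : w ∈ GeodLang) : IsWord w := by
  rcases h with (⟨x, rfl⟩ | ⟨x, y, rfl⟩) | ⟨x₁, y, x₂, -, -, rfl⟩ <;>
    simp only [isWord_append, isWord_apow, isWord_gt, and_self]

lemma length_eq_normLength_of_mem_geodLang {w : List GG} (h : w ∈ GeodLang) :
    w.length = normLength w.prod := by
  rcases h with (⟨x, rfl⟩ | ⟨x, y, rfl⟩) | ⟨x₁, y, x₂, hy, hx, rfl⟩
  · rw [length_apow, prod_apow, normLength_el_zero, if_pos rfl, Int.natAbs_zero, add_zero, add_zero]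
  · simp only [List.length_append, length_apow, List.length_singleton, prod_apow_gt_apow,
      normLength_el_one]
    omega
  · simp only [List.length_append, length_apow, List.length_singleton,
      prod_apow_gt_apow_gt_apow, normLength_el_zero, if_neg hy]
    rcases mul_nonneg_iff.mp hx with ⟨h₁, h₂⟩ | ⟨h₁, h₂⟩ <;> omega

lemma exists_mem_geodLang_prod_eq (g : GG) : ∃ w ∈ GeodLang, w.prod = g := by
  obtain ⟨x, y, e, rfl⟩ := exists_eq_el g
  rcases zmod_two_cases e with rfl | rfl
  · by_cases hy : y = 0
    · exact ⟨apow x, apow_mem_geodLang x, hy ▸ prod_apow x⟩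
    · refine ⟨_, apow_gt_apow_gt_apow_mem_geodLang (x₁ := x) (x₂ := 0) hy (by rw [mul_zero]), ?_⟩
      rw [prod_apow_gt_apow_gt_apow, add_zero]
  · exact ⟨_, apow_gt_apow_mem_geodLang x y, prod_apow_gt_apow x y⟩

lemma isGeodesic_iff {w : List GG} :
    IsGeodesic w ↔ IsWord w ∧ w.length = normLength w.prod := by
  constructor
  · rintro ⟨hw, hmin⟩
    obtain ⟨v, hv, hprod⟩ := exists_mem_geodLang_prod_eq w.prod
    refine ⟨hw, le_antisymm ?_ (normLength_prod_le hw)⟩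
    calc w.length ≤ v.length := hmin v (isWord_of_mem_geodLang hv) hprod
      _ = normLength w.prod := by rw [length_eq_normLength_of_mem_geodLang hv, hprod]
  · rintro ⟨hw, h⟩
    exact ⟨hw, fun v hv hprod => h ▸ hprod ▸ normLength_prod_le hv⟩

lemma cons_apow_mem_geodLang {s : GG} (hs : s ∈ GenSet) {x : ℤ}
    (h : normLength (s * (apow x).prod) = (apow x).length + 1) : s :: apow x ∈ GeodLang := by
  rw [prod_apow, length_apow] at h
  rcases mem_genSet_iff.mp hs with rfl | rfl | rfl
  · rw [ga_mul_el, normLength_el_zero, if_pos rfl] at h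
    rw [ga_cons_apow (by omega)]
    exact apow_mem_geodLang _
  · rw [ga_inv_mul_el, normLength_el_zero, if_pos rfl] at h
    rw [ga_inv_cons_apow (by omega)]
    exact apow_mem_geodLang _
  · exact apow_gt_apow_mem_geodLang 0 x

lemma cons_apow_gt_apow_mem_geodLang {s : GG} (hs : s ∈ GenSet) {x y : ℤ}
    (h : normLength (s * (apow x ++ [gt] ++ apow y).prod) =
      (apow x ++ [gt] ++ apow y).length + 1) :
    s :: (apow x ++ [gt] ++ apow y) ∈ GeodLang := by
  simp only [prod_apow_gt_apow, List.length_append, length_apow, List.length_singleton] at h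
  simp only [← List.cons_append]
  rcases mem_genSet_iff.mp hs with rfl | rfl | rfl
  · rw [ga_mul_el, normLength_el_one] at h
    rw [ga_cons_apow (by omega)]
    exact apow_gt_apow_mem_geodLang _ _
  · rw [ga_inv_mul_el, normLength_el_one] at h
    rw [ga_inv_cons_apow (by omega)]
    exact apow_gt_apow_mem_geodLang _ _
  · rw [gt_mul_el_one, normLength_el_zero] at h
    have hx : x ≠ 0 := by
      rintro rfl
      rw [if_pos rfl] at h
      omega
    exact apow_gt_apow_gt_apow_mem_geodLang (x₁ := 0) hx (by rw [zero_mul])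

lemma cons_apow_gt_apow_gt_apow_mem_geodLang {s : GG} (hs : s ∈ GenSet) {x₁ y x₂ : ℤ}
    (hy : y ≠ 0) (hx : x₁ * x₂ ≥ 0)
    (h : normLength (s * (apow x₁ ++ [gt] ++ apow y ++ [gt] ++ apow x₂).prod) =
      (apow x₁ ++ [gt] ++ apow y ++ [gt] ++ apow x₂).length + 1) :
    s :: (apow x₁ ++ [gt] ++ apow y ++ [gt] ++ apow x₂) ∈ GeodLang := by
  simp only [prod_apow_gt_apow_gt_apow, List.length_append, length_apow,
    List.length_singleton] at h
  simp only [← List.cons_append]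
  rcases mem_genSet_iff.mp hs with rfl | rfl | rfl
  · rw [ga_mul_el, normLength_el_zero, if_neg hy] at h
    have hx₂ : 0 ≤ x₂ := by rcases mul_nonneg_iff.mp hx with ⟨h₁, h₂⟩ | ⟨h₁, h₂⟩ <;> omega
    rw [ga_cons_apow (by omega)]
    exact apow_gt_apow_gt_apow_mem_geodLang hy (mul_nonneg (by omega) hx₂)
  · rw [ga_inv_mul_el, normLength_el_zero, if_neg hy] at h
    have hx₂ : x₂ ≤ 0 := by rcases mul_nonneg_iff.mp hx with ⟨h₁, h₂⟩ | ⟨h₁, h₂⟩ <;> omega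
    rw [ga_inv_cons_apow (by omega)]
    exact apow_gt_apow_gt_apow_mem_geodLang hy (mul_nonneg_of_nonpos_of_nonpos (by omega) hx₂)
  · rw [gt_mul_el_zero, normLength_el_one] at h
    omega

lemma cons_mem_geodLang {s : GG} (hs : s ∈ GenSet) {v : List GG} (hv : v ∈ GeodLang)
    (h : normLength (s * v.prod) = v.length + 1) : s :: v ∈ GeodLang := by
  rcases hv with (⟨x, rfl⟩ | ⟨x, y, rfl⟩) | ⟨x₁, y, x₂, hy, hx, rfl⟩
  · exact cons_apow_mem_geodLang hs h
  · exact cons_apow_gt_apow_mem_geodLang hs h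
  · exact cons_apow_gt_apow_gt_apow_mem_geodLang hs hy hx h

lemma mem_geodLang_iff {w : List GG} :
    w ∈ GeodLang ↔ IsWord w ∧ w.length = normLength w.prod := by
  refine ⟨fun h => ⟨isWord_of_mem_geodLang h, length_eq_normLength_of_mem_geodLang h⟩, ?_⟩
  rintro ⟨hw, h⟩
  induction w with
  | nil => exact apow_mem_geodLang 0
  | cons s v ih =>
    obtain ⟨hs, hv⟩ := List.forall_mem_cons.mp hw
    rw [List.length_cons, List.prod_cons] at h
    have hv_le := normLength_prod_le hv
    have hs_le := normLength_gen_mul_le hs v.prod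
    exact cons_mem_geodLang hs (ih hv (by omega)) (by omega)

theorem geodesic_iff_mem_lang_general (w : List GG) :
    IsGeodesic w ↔ w ∈ GeodLang :=
  isGeodesic_iff.trans mem_geodLang_iff.symm

/-- A word over A is geodesic iff it lies in the language
L = {aˣ} ∪ {aˣ t aʸ} ∪ {a^{x₁} t aʸ t a^{x₂} : y ≠ 0, x₁·x₂ ≥ 0}. -/
theorem geodesic_iff_mem_lang (w : List GG) (hw : IsWord w) :
    IsGeodesic w ↔ w ∈ GeodLang :=
  geodesic_iff_mem_lang_general w
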